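/- The modified connection ∇̃ = ∇ - Q is torsion-free: for all m ≠ n, ∇̃_{f_m} f_n - ∇̃_{f_n} f_m = [f_m, f_n]_m, ∇̃_{f_m} g_n - ∇̃_{g_n} f_m = [f_m, g_n]_m, and ∇̃_{g_m} g_n - ∇̃_{g_n} g_m = [g_m, g_n]_m. -/
import Mathlib


/-- index type for the basis `{f_{k+1}} ∪ {g_{k+1}}` of `diff_0(S¹)`:
`Sum.inl k` stands for `f_{k+1} = cos((k+1)t)`, `Sum.inr k` for `g_{k+1} = sin((k+1)t)`. -/
abbrev Idx := ℕ ⊕ ℕ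

/-- `diff_0(S¹)`, modelled as the free vector space on the basis `{f_k, g_k : k ≥ 1}`. -/
abbrev V := Idx →₀ ℝ

/-- `f_k = cos(kt)` as an element of `diff_0(S¹)` (with `f_0` projected to `0`). -/
noncomputable def Fb : ℕ → V := fun k =>
  if k = 0 then 0 else Finsupp.single (Sum.inl (k - 1)) 1

/-- `g_k = sin(kt)` as an element of `diff_0(S¹)` (with `g_0 = 0`). -/
noncomputable def Gb : ℕ → V := fun k =>
  if k = 0 then 0 else Finsupp.single (Sum.inr (k - 1)) 1

/-- `θ_k = 2hk + (c/12)(k³ - k)` -/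
noncomputable def th (c h : ℝ) (k : ℤ) : ℝ := 2 * h * k + c / 12 * ((k : ℝ) ^ 3 - k)

/-- `λ_{m,n} = (2n+m)θ_m / (2θ_{m+n})` -/
noncomputable def lam (c h : ℝ) (m n : ℤ) : ℝ :=
  (2 * (n : ℝ) + m) * th c h m / (2 * th c h (m + n))

/-- `|M - N|` for natural numbers -/
def dN (M N : ℕ) : ℕ := max M N - min M N

/-- `sign (M - N)` -/
noncomputable def sg (M N : ℕ) : ℝ := if N < M then 1 else -1

/-- the projected bracket `[·,·]_m` on basis elements, given by
`[f_M, f_N]_m = ((M-N)/2) g_{M+N} + ((M+N)/2) sign(M-N) g_{|M-N|}`,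
`[g_M, g_N]_m = ((N-M)/2) g_{M+N} + ((M+N)/2) sign(M-N) g_{|M-N|}`,
`[f_M, g_N]_m = ((N-M)/2) f_{M+N} + ((M+N)/2) f_{|M-N|}` (the `f_0` term being projected away),
and `[g_M, f_N]_m = -[f_N, g_M]_m`. -/
noncomputable def brB : Idx → Idx → V
  | Sum.inl m, Sum.inl n =>
      (((m : ℝ) - n) / 2) • Gb (m + n + 2)
        + (((m : ℝ) + n + 2) / 2 * sg (m + 1) (n + 1)) • Gb (dN (m + 1) (n + 1))
  | Sum.inl m, Sum.inr n =>
      (((n : ℝ) - m) / 2) • Fb (m + n + 2)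
        + (((m : ℝ) + n + 2) / 2) • Fb (dN (m + 1) (n + 1))
  | Sum.inr m, Sum.inl n =>
      -((((m : ℝ) - n) / 2) • Fb (m + n + 2)
        + (((m : ℝ) + n + 2) / 2) • Fb (dN (m + 1) (n + 1)))
  | Sum.inr m, Sum.inr n =>
      (((n : ℝ) - m) / 2) • Gb (m + n + 2)
        + (((m : ℝ) + n + 2) / 2 * sg (m + 1) (n + 1)) • Gb (dN (m + 1) (n + 1))

/-- bilinear extension of a map given on basis elements -/
noncomputable def bil (φ : Idx → Idx → V) (x y : V) : V :=
  x.sum fun i a => y.sum fun j b => (a * b) • φ i j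

/-- the projected (mean-zero) bracket `[·,·]_m` on `diff_0(S¹)` -/
noncomputable def brm : V → V → V := bil brB

/-- the inner product `B` on basis elements: `B(f_M, f_N) = B(g_M, g_N) = (θ_M/2)δ_{M,N}`,
`B(f_M, g_N) = 0`. -/
noncomputable def ipB (c h : ℝ) : Idx → Idx → ℝ
  | Sum.inl m, Sum.inl n => if m = n then th c h (m + 1) / 2 else 0
  | Sum.inr m, Sum.inr n => if m = n then th c h (m + 1) / 2 else 0
  | _, _ => 0

/-- the inner product `B(f,g) = ω_{c,h}(f, Jg)` on `diff_0(S¹)` -/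
noncomputable def Bf (c h : ℝ) (x y : V) : ℝ :=
  x.sum fun i a => y.sum fun j b => a * b * ipB c h i j

lemma th_pos (c h : ℝ) (hc : 0 < c) (hh : 0 < h) (k : ℤ) (hk : 1 ≤ k) :
    0 < th c h k := by
  unfold th
  have hk' : (1 : ℝ) ≤ (k : ℝ) := by exact_mod_cast hk
  have h1 : 0 ≤ ((k : ℝ) - 1) * k * (k + 1) :=
    mul_nonneg (mul_nonneg (by linarith) (by linarith)) (by linarith)
  have h2 : 0 ≤ (k : ℝ) ^ 3 - k := by nlinarith [h1]
  have h3 : 0 ≤ c / 12 * ((k : ℝ) ^ 3 - k) :=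
    mul_nonneg (le_of_lt (div_pos hc (by norm_num))) h2
  have h4 : 0 < 2 * h * (k : ℝ) := by nlinarith
  linarith

lemma lam_sub (c h : ℝ) (hc : 0 < c) (hh : 0 < h) (m n : ℤ) (hm : 1 ≤ m) (hn : 1 ≤ n) :
    lam c h m n - lam c h n m = ((m : ℝ) - n) / 2 := by
  have hT : th c h (m + n) ≠ 0 := ne_of_gt (th_pos c h hc hh _ (by omega))
  have hT' : th c h (n + m) = th c h (m + n) := by rw [add_comm]
  unfold lam
  rw [hT']
  rw [div_sub_div_same]
  rw [div_eq_iff (mul_ne_zero two_ne_zero hT)]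
  unfold th
  push_cast
  ring

lemma brm_basis (i j : Idx) :
    brm (Finsupp.single i 1) (Finsupp.single j 1) = brB i j := by
  unfold brm bil
  rw [Finsupp.sum_single_index, Finsupp.sum_single_index]
  · simp
  · simp
  · rw [Finsupp.sum_single_index] <;> simp

/-- The modified connection `∇̃ = ∇ - Q`, given by its explicit values on the basis,
is torsion-free: `∇̃_x y - ∇̃_y x = [x,y]_m` on basis elements. -/
theorem nablaTilde_torsion_free (c h : ℝ) (hc : 0 < c) (hh : 0 < h)
    (Dt : V → V → V)
    (hff1 : ∀ m n : ℕ, 1 ≤ m → m < n →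
      Dt (Fb m) (Fb n) = lam c h m n • Gb (n + m) - (((m : ℝ) + n) / 2) • Gb (n - m))
    (hff2 : ∀ m n : ℕ, 1 ≤ n → n < m → Dt (Fb m) (Fb n) = lam c h m n • Gb (n + m))
    (hff3 : ∀ n : ℕ, 1 ≤ n → Dt (Fb n) (Fb n) = lam c h n n • Gb (2 * n))
    (hfg1 : ∀ m n : ℕ, 1 ≤ m → m < n →
      Dt (Fb m) (Gb n) = (((m : ℝ) + n) / 2) • Fb (n - m) - lam c h m n • Fb (n + m))
    (hfg2 : ∀ m n : ℕ, 1 ≤ n → n < m → Dt (Fb m) (Gb n) = (-lam c h m n) • Fb (n + m))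
    (hfg3 : ∀ n : ℕ, 1 ≤ n → Dt (Fb n) (Gb n) = (-lam c h n n) • Fb (2 * n))
    (hgf1 : ∀ m n : ℕ, 1 ≤ m → m < n → Dt (Gb n) (Fb m) = (-lam c h n m) • Fb (n + m))
    (hgf2 : ∀ m n : ℕ, 1 ≤ n → n < m →
      Dt (Gb n) (Fb m) = (-lam c h n m) • Fb (n + m) - (((m : ℝ) + n) / 2) • Fb (m - n))
    (hgf3 : ∀ n : ℕ, 1 ≤ n → Dt (Gb n) (Fb n) = (-lam c h n n) • Fb (2 * n))
    (hgg1 : ∀ m n : ℕ, 1 ≤ m → m < n →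
      Dt (Gb m) (Gb n) = (-lam c h m n) • Gb (n + m) - (((m : ℝ) + n) / 2) • Gb (n - m))
    (hgg2 : ∀ m n : ℕ, 1 ≤ n → n < m → Dt (Gb m) (Gb n) = (-lam c h m n) • Gb (n + m))
    (hgg3 : ∀ n : ℕ, 1 ≤ n → Dt (Gb n) (Gb n) = (-lam c h n n) • Gb (2 * n))
    (m n : ℕ) (hm : 1 ≤ m) (hn : 1 ≤ n) (hmn : m ≠ n) :
    Dt (Fb m) (Fb n) - Dt (Fb n) (Fb m) = brm (Fb m) (Fb n) ∧
    Dt (Fb m) (Gb n) - Dt (Gb n) (Fb m) = brm (Fb m) (Gb n) ∧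
    Dt (Gb m) (Gb n) - Dt (Gb n) (Gb m) = brm (Gb m) (Gb n) := by
  obtain ⟨M, rfl⟩ : ∃ M, m = M + 1 := ⟨m - 1, by omega⟩
  obtain ⟨N, rfl⟩ : ∃ N, n = N + 1 := ⟨n - 1, by omega⟩
  have hFm : Fb (M + 1) = Finsupp.single (Sum.inl M) 1 := by simp [Fb]
  have hFn : Fb (N + 1) = Finsupp.single (Sum.inl N) 1 := by simp [Fb]
  have hGm : Gb (M + 1) = Finsupp.single (Sum.inr M) 1 := by simp [Gb]
  have hGn : Gb (N + 1) = Finsupp.single (Sum.inr N) 1 := by simp [Gb]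
  have hb1 : brm (Fb (M + 1)) (Fb (N + 1)) = brB (Sum.inl M) (Sum.inl N) := by
    rw [hFm, hFn, brm_basis]
  have hb2 : brm (Fb (M + 1)) (Gb (N + 1)) = brB (Sum.inl M) (Sum.inr N) := by
    rw [hFm, hGn, brm_basis]
  have hb3 : brm (Gb (M + 1)) (Gb (N + 1)) = brB (Sum.inr M) (Sum.inr N) := by
    rw [hGm, hGn, brm_basis]
  have key := lam_sub c h hc hh ((M + 1 : ℕ) : ℤ) ((N + 1 : ℕ) : ℤ) (by omega) (by omega)
  rcases Nat.lt_or_ge M N with hlt | hge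
  · -- M < N, i.e. m < n
    have hs : sg (M + 1) (N + 1) = -1 := by unfold sg; rw [if_neg (by omega)]
    have hd : dN (M + 1) (N + 1) = N + 1 - (M + 1) := by unfold dN; omega
    have hi1 : N + 1 + (M + 1) = M + N + 2 := by omega
    have hi2 : M + 1 + (N + 1) = M + N + 2 := by omega
    refine ⟨?_, ?_, ?_⟩
    · rw [hff1 (M + 1) (N + 1) (by omega) (by omega),
        hff2 (N + 1) (M + 1) (by omega) (by omega), hb1]
      show _ = _ • Gb (M + N + 2) + _ • Gb (dN (M + 1) (N + 1))
      simp only [hs, hd, hi1, hi2]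
      match_scalars <;> push_cast at key ⊢ <;> linarith
    · rw [hfg1 (M + 1) (N + 1) (by omega) (by omega),
        hgf1 (M + 1) (N + 1) (by omega) (by omega), hb2]
      show _ = _ • Fb (M + N + 2) + _ • Fb (dN (M + 1) (N + 1))
      simp only [hd, hi1, hi2]
      match_scalars <;> push_cast at key ⊢ <;> linarith
    · rw [hgg1 (M + 1) (N + 1) (by omega) (by omega),
        hgg2 (N + 1) (M + 1) (by omega) (by omega), hb3]
      show _ = _ • Gb (M + N + 2) + _ • Gb (dN (M + 1) (N + 1))
      simp only [hs, hd, hi1, hi2]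
      match_scalars <;> push_cast at key ⊢ <;> linarith
  · -- N < M, i.e. n < m
    have hlt : N < M := by omega
    have hs : sg (M + 1) (N + 1) = 1 := by unfold sg; rw [if_pos (by omega)]
    have hd : dN (M + 1) (N + 1) = M + 1 - (N + 1) := by unfold dN; omega
    have hi1 : N + 1 + (M + 1) = M + N + 2 := by omega
    have hi2 : M + 1 + (N + 1) = M + N + 2 := by omega
    refine ⟨?_, ?_, ?_⟩
    · rw [hff2 (M + 1) (N + 1) (by omega) (by omega),
        hff1 (N + 1) (M + 1) (by omega) (by omega), hb1]
      show _ = _ • Gb (M + N + 2) + _ • Gb (dN (M + 1) (N + 1))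
      simp only [hs, hd, hi1, hi2]
      match_scalars <;> push_cast at key ⊢ <;> linarith
    · rw [hfg2 (M + 1) (N + 1) (by omega) (by omega),
        hgf2 (M + 1) (N + 1) (by omega) (by omega), hb2]
      show _ = _ • Fb (M + N + 2) + _ • Fb (dN (M + 1) (N + 1))
      simp only [hd, hi1, hi2]
      match_scalars <;> push_cast at key ⊢ <;> linarith
    · rw [hgg2 (M + 1) (N + 1) (by omega) (by omega),
        hgg1 (N + 1) (M + 1) (by omega) (by omega), hb3]
      show _ = _ • Gb (M + N + 2) + _ • Gb (dN (M + 1) (N + 1))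
      simp only [hs, hd, hi1, hi2]
      match_scalars <;> push_cast at key ⊢ <;> linarith
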